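/- Let G be a C_6-saturated graph on n vertices and let G_1 be the graph obtained from G by deleting all vertices of T_2(G). Then G_1 is C_6-saturated and T_2(G_1) = ∅. -/

import Mathlib

open SimpleGraph

/-- The graph obtained from `G` by adding the edge `uv`. -/
def addEdge {V : Type*} (G : SimpleGraph V) (u v : V) : SimpleGraph V :=
  G ⊔ SimpleGraph.fromEdgeSet {s(u, v)}

/-- `G` contains a cycle of length `k`. -/
def HasCycleLen {V : Type*} (G : SimpleGraph V) (k : ℕ) : Prop :=
  ∃ (v : V) (c : G.Walk v v), c.IsCycle ∧ c.length = k

/-- `G` is `C_k`-saturated. -/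
def IsCSaturated {V : Type*} (k : ℕ) (G : SimpleGraph V) : Prop :=
  ¬ HasCycleLen G k ∧ ∀ u v : V, u ≠ v → ¬ G.Adj u v → HasCycleLen (addEdge G u v) k

/-- degree of a vertex. -/
noncomputable def degOf {V : Type*} (G : SimpleGraph V) (v : V) : ℕ :=
  (G.neighborSet v).ncard

/-- `v` lies in a triangle of `G`. -/
def InTriangle {V : Type*} (G : SimpleGraph V) (v : V) : Prop :=
  ∃ a b, G.Adj v a ∧ G.Adj v b ∧ G.Adj a b

/-- `T₂(G)`: degree-2 vertices in a triangle having a degree-2 neighbour. -/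
def T2set {V : Type*} (G : SimpleGraph V) : Set V :=
  {v | degOf G v = 2 ∧ InTriangle G v ∧ ∃ w, G.Adj v w ∧ degOf G w = 2}

/-!
A vertex `z ∈ T₂(G)` spans, with its degree-two partner, a pendant triangle: if `a ∉ T₂(G)` is a
neighbour of `z`, the other neighbour `x` of `z` lies in `T₂(G)` and is adjacent to `a` and `z`
only. So a path whose ends lie outside `T₂(G)` never enters it, and the 5-paths witnessing the
saturation of `G` survive in `G₁ = G - T₂(G)`.

If `v ∈ T₂(G₁)` with partner `a` and apex `b`, then `v` or `a` has a neighbour in `T₂(G)`, since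
otherwise `v ∈ T₂(G)`. Say `a` is the apex of a pendant triangle `a t x` of `G`. The 5-path from
`v` to `t` in `G` ends with `a t` or `a x t`, so its part from `v` to `a` has at least two inner
vertices, and its first and last inner vertex lie outside `T₂(G)`. Both are then `b`, because
outside `T₂(G)` the neighbours of `v` are `a, b` and those of `a` are `v, b`.
-/

section Cycles

variable {V W : Type*} {G : SimpleGraph V} {u v w : V} {k : ℕ}

lemma HasCycleLen.map {H : SimpleGraph W} (f : G ↪g H) (h : HasCycleLen G k) :
    HasCycleLen H k := by
  obtain ⟨v, c, hc, rfl⟩ := h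
  exact ⟨f v, c.map f.toHom, hc.map f.injective, c.length_map _⟩

lemma SimpleGraph.Walk.IsCycle.eq_snd_or_eq_penultimate {c : G.Walk u u} (hc : c.IsCycle)
    (he : s(u, v) ∈ c.edges) : v = c.snd ∨ v = c.penultimate := by
  cases c with
  | nil => simp at he
  | cons h q =>
    rw [Walk.cons_isCycle_iff] at hc
    rw [Walk.edges_cons, List.mem_cons, Sym2.congr_right] at he
    rcases he with rfl | he
    · exact .inl (by simp)
    · rw [Walk.penultimate_cons_of_not_nil _ _ (Walk.not_nil_of_ne h.ne.symm)]
      exact .inr (hc.1.eq_penultimate_of_mem_edges he)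

lemma SimpleGraph.Walk.IsCycle.exists_isPath_of_mem_edges {c : G.Walk w w} (hc : c.IsCycle)
    (he : s(u, v) ∈ c.edges) : ∃ p : G.Walk u v, p.IsPath ∧ p.length + 1 = c.length := by
  classical
  have hu := c.fst_mem_support_of_mem_edges he
  rw [← c.length_rotate u hu]
  replace he : s(u, v) ∈ (c.rotate u hu).edges := (c.rotate_edges u hu).mem_iff.mpr he
  replace hc := hc.rotate hu
  generalize c.rotate u hu = c at hc he ⊢
  rcases hc.eq_snd_or_eq_penultimate he with rfl | rfl
  · exact ⟨c.tail.reverse, hc.isPath_tail.reverse, by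
      rw [Walk.length_reverse, Walk.length_tail_add_one hc.not_nil]⟩
  · exact ⟨c.dropLast, hc.isPath_dropLast, Walk.length_dropLast_add_one hc.not_nil⟩

lemma mem_edgeSet_of_mem_edgeSet_addEdge {e : Sym2 V} (he : e ∈ (addEdge G u v).edgeSet)
    (hne : e ≠ s(u, v)) : e ∈ G.edgeSet := by
  simpa [addEdge, hne] using he

lemma hasCycleLen_addEdge_iff (hG : ¬ HasCycleLen G k) (hne : u ≠ v) (huv : ¬ G.Adj u v) :
    HasCycleLen (addEdge G u v) k ↔ ∃ p : G.Walk u v, p.IsPath ∧ p.length + 1 = k := by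
  constructor
  · rintro ⟨w, c, hc, rfl⟩
    have he : s(u, v) ∈ c.edges := by
      by_contra he
      refine hG ⟨w, c.transfer G fun e he' => ?_, hc.transfer _, c.length_transfer _⟩
      exact mem_edgeSet_of_mem_edgeSet_addEdge (c.edges_subset_edgeSet he')
        (ne_of_mem_of_not_mem he' he)
    obtain ⟨p, hp, hlen⟩ := hc.exists_isPath_of_mem_edges he
    have hpe : s(u, v) ∉ p.edges := fun h => by
      have := hp.length_eq_one_of_mem_edges h
      have := hc.three_le_length
      omega
    refine ⟨p.transfer G fun e he' => ?_, hp.transfer _, by rw [Walk.length_transfer, hlen]⟩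
    exact mem_edgeSet_of_mem_edgeSet_addEdge (p.edges_subset_edgeSet he')
      (ne_of_mem_of_not_mem he' hpe)
  · rintro ⟨p, hp, rfl⟩
    have hvu : (addEdge G u v).Adj v u := by simp [addEdge, hne.symm, Sym2.eq_swap]
    have hle : G ≤ addEdge G u v := le_sup_left
    refine ⟨v, .cons hvu (p.mapLe hle), ?_, by simp⟩
    rw [Walk.cons_isCycle_iff, Walk.edges_mapLe_eq_edges]
    exact ⟨(Walk.isPath_mapLe hle).mpr hp, fun h => huv (p.adj_of_mem_edges h).symm⟩

lemma isCSaturated_iff : IsCSaturated k G ↔ ¬ HasCycleLen G k ∧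
    ∀ u v, u ≠ v → ¬ G.Adj u v → ∃ p : G.Walk u v, p.IsPath ∧ p.length + 1 = k :=
  and_congr_right fun hG => forall₂_congr fun _ _ => forall₂_congr fun hne huv =>
    hasCycleLen_addEdge_iff hG hne huv

lemma exists_isPath_length_add_one_eq_six_iff :
    (∃ p : G.Walk u v, p.IsPath ∧ p.length + 1 = 6) ↔
    ∃ a b c d, G.Adj u a ∧ G.Adj a b ∧ G.Adj b c ∧ G.Adj c d ∧ G.Adj d v ∧
      [u, a, b, c, d, v].Nodup := by
  constructor
  · rintro ⟨p, hp, hlen⟩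
    rcases p with _ | ⟨h₁, _ | ⟨h₂, _ | ⟨h₃, _ | ⟨h₄, _ | ⟨h₅, _ | ⟨_, _⟩⟩⟩⟩⟩⟩ <;>
      simp at hlen
    exact ⟨_, _, _, _, h₁, h₂, h₃, h₄, h₅, by simpa [Walk.isPath_def] using hp⟩
  · rintro ⟨a, b, c, d, h₁, h₂, h₃, h₄, h₅, hnd⟩
    exact ⟨.cons h₁ (.cons h₂ (.cons h₃ (.cons h₄ (.cons h₅ .nil)))),
      by simpa [Walk.isPath_def] using hnd, rfl⟩

lemma isCSaturated_six_iff : IsCSaturated 6 G ↔ ¬ HasCycleLen G 6 ∧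
    ∀ u v, u ≠ v → ¬ G.Adj u v → ∃ a b c d, G.Adj u a ∧ G.Adj a b ∧ G.Adj b c ∧ G.Adj c d ∧
      G.Adj d v ∧ [u, a, b, c, d, v].Nodup := by
  simp only [isCSaturated_iff, exists_isPath_length_add_one_eq_six_iff]

end Cycles

section T2

variable {V : Type*} {G : SimpleGraph V} {v a b z x w₀ w₁ w₂ w₃ : V}

lemma neighborSet_eq_pair_of_degOf_eq_two (hz : degOf G z = 2) (ha : G.Adj z a)
    (hb : G.Adj z b) (hab : a ≠ b) : G.neighborSet z = {a, b} := by
  unfold degOf at hz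
  refine (Set.eq_of_subset_of_ncard_le ?_ ?_ (Set.finite_of_ncard_ne_zero (by omega))).symm
  · rintro x (rfl | rfl) <;> assumption
  · rw [hz, Set.ncard_pair hab]

lemma eq_or_eq_of_neighborSet_eq_pair (hN : G.neighborSet z = {a, b}) (h : G.Adj z x) :
    x = a ∨ x = b := by
  have hx : x ∈ G.neighborSet z := h
  rwa [hN] at hx

lemma mem_T2set_of_neighborSet_eq_pair (hNv : G.neighborSet v = {a, b})
    (hNa : G.neighborSet a = {v, b}) (hab : G.Adj a b) : v ∈ T2set G := by
  have hva : G.Adj v a := (hNv ▸ Set.mem_insert a {b} : a ∈ G.neighborSet v)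
  have hvb : G.Adj v b := (hNv ▸ Set.mem_insert_of_mem a rfl : b ∈ G.neighborSet v)
  refine ⟨?_, ⟨a, b, hva, hvb, hab⟩, a, hva, ?_⟩
  · rw [degOf, hNv, Set.ncard_pair hab.ne]
  · rw [degOf, hNa, Set.ncard_pair hvb.ne]

lemma exists_partner_of_mem_T2set (hz : z ∈ T2set G) :
    ∃ a b, G.Adj z a ∧ G.Adj a b ∧ a ∈ T2set G ∧
      G.neighborSet z = {a, b} ∧ G.neighborSet a = {z, b} := by
  obtain ⟨hz2, ⟨x, y, hx, hy, hxy⟩, w, hw, hw2⟩ := hz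
  have hNz := neighborSet_eq_pair_of_degOf_eq_two hz2 hx hy hxy.ne
  have hwT : w ∈ T2set G := by
    refine ⟨hw2, ?_, z, hw.symm, hz2⟩
    rcases eq_or_eq_of_neighborSet_eq_pair hNz hw with rfl | rfl
    exacts [⟨z, y, hx.symm, hxy, hy⟩, ⟨z, x, hy.symm, hxy.symm, hx⟩]
  rcases eq_or_eq_of_neighborSet_eq_pair hNz hw with rfl | rfl
  · exact ⟨w, y, hx, hxy, hwT, hNz,
      neighborSet_eq_pair_of_degOf_eq_two hw2 hx.symm hxy hy.ne⟩
  · exact ⟨w, x, hy, hxy.symm, hwT, by rw [hNz, Set.pair_comm],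
      neighborSet_eq_pair_of_degOf_eq_two hw2 hy.symm hxy.symm hx.ne⟩

lemma exists_pendant_of_adj_mem_T2set (ha : a ∉ T2set G) (hz : z ∈ T2set G) (haz : G.Adj a z) :
    ∃ x ∈ T2set G, G.neighborSet z = {a, x} ∧ G.neighborSet x = {a, z} := by
  obtain ⟨x, b, -, -, hx, hNz, hNx⟩ := exists_partner_of_mem_T2set hz
  rcases eq_or_eq_of_neighborSet_eq_pair hNz haz.symm with rfl | rfl
  · exact absurd hx ha
  · exact ⟨x, hx, by rw [hNz, Set.pair_comm], by rw [hNx, Set.pair_comm]⟩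

lemma notMem_T2set_of_adj (h₀ : w₀ ∉ T2set G) (h₀₁ : G.Adj w₀ w₁) (h₁₂ : G.Adj w₁ w₂)
    (h₂₃ : G.Adj w₂ w₃) (h₂₀ : w₂ ≠ w₀) (h₃₀ : w₃ ≠ w₀) (h₃₁ : w₃ ≠ w₁) : w₁ ∉ T2set G := by
  intro h₁
  obtain ⟨x, -, hN₁, hNx⟩ := exists_pendant_of_adj_mem_T2set h₀ h₁ h₀₁
  obtain rfl := (eq_or_eq_of_neighborSet_eq_pair hN₁ h₁₂).resolve_left h₂₀
  rcases eq_or_eq_of_neighborSet_eq_pair hNx h₂₃ with h | h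
  exacts [h₃₀ h, h₃₁ h]

end T2

section DeleteT2

variable {V : Type*} {G : SimpleGraph V}

lemma isCSaturated_induce_compl_T2set (hG : IsCSaturated 6 G) :
    IsCSaturated 6 (G.induce (T2set G)ᶜ) := by
  rw [isCSaturated_six_iff] at hG ⊢
  refine ⟨fun h => hG.1 (h.map (Embedding.induce _)), fun u v hne huv => ?_⟩
  obtain ⟨a, b, c, d, hua, hab, hbc, hcd, hdv, hnd⟩ :=
    hG.2 u v (Subtype.coe_injective.ne hne) huv
  have hnd' := hnd
  simp only [List.nodup_cons, List.mem_cons, List.not_mem_nil, or_false, not_or, List.nodup_nil,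
    and_true, ← ne_eq] at hnd'
  obtain ⟨⟨-, hub, huc, -, -⟩, ⟨-, hac, had, -⟩, ⟨-, hbd, hbv⟩, ⟨-, hcv⟩, -⟩ := hnd'
  have ha : a ∉ T2set G := notMem_T2set_of_adj u.2 hua hab hbc hub.symm huc.symm hac.symm
  have hd : d ∉ T2set G := notMem_T2set_of_adj v.2 hdv.symm hcd.symm hbc.symm hcv hbv hbd
  have hb : b ∉ T2set G := notMem_T2set_of_adj ha hab hbc hcd hac.symm had.symm hbd.symm
  have hc : c ∉ T2set G := notMem_T2set_of_adj hd hcd.symm hbc.symm hab.symm hbd had hac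
  exact ⟨⟨a, ha⟩, ⟨b, hb⟩, ⟨c, hc⟩, ⟨d, hd⟩, hua, hab, hbc, hcd, hdv,
    List.Nodup.of_map Subtype.val (by exact hnd)⟩

lemma neighborSet_inter_eq_of_induce {s : Set V} {v a b : s}
    (h : (G.induce s).neighborSet v = {a, b}) : G.neighborSet v ∩ s = {↑a, ↑b} := by
  ext x
  constructor
  · rintro ⟨hx, hxs⟩
    have hx' : (⟨x, hxs⟩ : s) ∈ (G.induce s).neighborSet v := hx
    rw [h] at hx'
    rcases hx' with rfl | rfl
    exacts [.inl rfl, .inr rfl]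
  · have ha : a ∈ (G.induce s).neighborSet v := h ▸ Set.mem_insert a {b}
    have hb : b ∈ (G.induce s).neighborSet v := h ▸ Set.mem_insert_of_mem a rfl
    rintro (rfl | rfl)
    exacts [⟨ha, a.2⟩, ⟨hb, b.2⟩]

lemma IsCSaturated.not_adj_T2set_of_neighborSet_inter_subset (hG : IsCSaturated 6 G)
    {v a b : V} (hv : v ∉ T2set G) (ha : a ∉ T2set G) (hva : G.Adj v a)
    (hNv : G.neighborSet v ∩ (T2set G)ᶜ ⊆ {a, b})
    (hNa : G.neighborSet a ∩ (T2set G)ᶜ ⊆ {v, b}) : ∀ t ∈ T2set G, ¬ G.Adj a t := by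
  intro t ht hat
  obtain ⟨x, hx, hNt, hNx⟩ := exists_pendant_of_adj_mem_T2set ha ht hat
  have hvt : v ≠ t := fun h => hv (h ▸ ht)
  have hvt' : ¬ G.Adj v t := fun h =>
    (eq_or_eq_of_neighborSet_eq_pair hNt h.symm).elim hva.ne (fun h => hv (h ▸ hx))
  obtain ⟨p₁, p₂, p₃, p₄, h₁, h₂, h₃, h₄, h₅, hnd⟩ :=
    (isCSaturated_six_iff.mp hG).2 v t hvt hvt'
  simp only [List.nodup_cons, List.mem_cons, List.not_mem_nil, or_false, not_or, List.nodup_nil,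
    and_true, ← ne_eq] at hnd
  obtain ⟨⟨-, hv₂, hv₃, -, -⟩, ⟨h₁₂, h₁₃, h₁₄, -⟩, ⟨-, h₂₄, -⟩, ⟨-, h₃t⟩, -⟩ := hnd
  rcases eq_or_eq_of_neighborSet_eq_pair hNt h₅.symm with rfl | rfl
  · have hp₁ : p₁ ∉ T2set G := notMem_T2set_of_adj hv h₁ h₂ h₃ hv₂.symm hv₃.symm h₁₃.symm
    have hp₃ : p₃ ∉ T2set G :=
      notMem_T2set_of_adj ha h₄.symm h₃.symm h₂.symm h₂₄ h₁₄ h₁₃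
    have hp₁b : p₁ = b := (hNv ⟨h₁, hp₁⟩).resolve_left h₁₄
    have hp₃b : p₃ = b := (hNa ⟨h₄.symm, hp₃⟩).resolve_left hv₃.symm
    exact h₁₃ (hp₁b.trans hp₃b.symm)
  · obtain rfl := (eq_or_eq_of_neighborSet_eq_pair hNx h₄.symm).resolve_right h₃t
    have hp₁ : p₁ ∉ T2set G := notMem_T2set_of_adj hv h₁ h₂ h₃ hv₂.symm hv₃.symm h₁₃.symm
    have hp₂ : p₂ ∉ T2set G := notMem_T2set_of_adj ha h₃.symm h₂.symm h₁.symm h₁₃ hv₃ hv₂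
    have hp₁b : p₁ = b := (hNv ⟨h₁, hp₁⟩).resolve_left h₁₃
    have hp₂b : p₂ = b := (hNa ⟨h₃.symm, hp₂⟩).resolve_left hv₂.symm
    exact h₁₂ (hp₁b.trans hp₂b.symm)

lemma T2set_induce_compl_T2set_eq_empty (hG : IsCSaturated 6 G) :
    T2set (G.induce (T2set G)ᶜ) = ∅ := by
  refine Set.eq_empty_of_forall_notMem fun v hv => ?_
  obtain ⟨a, b, hva, hab, -, hNv, hNa⟩ := exists_partner_of_mem_T2set hv
  have hNv' := neighborSet_inter_eq_of_induce hNv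
  have hNa' := neighborSet_inter_eq_of_induce hNa
  have haT := hG.not_adj_T2set_of_neighborSet_inter_subset v.2 a.2 hva hNv'.subset hNa'.subset
  have hvT :=
    hG.not_adj_T2set_of_neighborSet_inter_subset a.2 v.2 hva.symm hNa'.subset hNv'.subset
  refine v.2 (mem_T2set_of_neighborSet_eq_pair (a := a) (b := b) ?_ ?_ hab)
  · rw [← hNv', eq_comm, Set.inter_eq_left]
    exact fun t ht hT => hvT t hT ht
  · rw [← hNa', eq_comm, Set.inter_eq_left]
    exact fun t ht hT => haT t hT ht

end DeleteT2

theorem delete_T2_saturated_general {V : Type*} (G : SimpleGraph V)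
    (hG : IsCSaturated 6 G) :
    IsCSaturated 6 (SimpleGraph.induce ((T2set G)ᶜ) G) ∧
      T2set (SimpleGraph.induce ((T2set G)ᶜ) G) = ∅ :=
  ⟨isCSaturated_induce_compl_T2set hG, T2set_induce_compl_T2set_eq_empty hG⟩

/-- Deleting T2(G) from a C6-saturated graph yields a C6-saturated graph with empty T2. -/
theorem delete_T2_saturated {V : Type*} [Fintype V] (G : SimpleGraph V)
    (hG : IsCSaturated 6 G) :
    IsCSaturated 6 (SimpleGraph.induce ((T2set G)ᶜ) G) ∧
      T2set (SimpleGraph.induce ((T2set G)ᶜ) G) = ∅ :=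
  delete_T2_saturated_general G hG
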